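/- arXiv:1811.10319 — 5 statements merged into one kernel-verified Lean document; each statement's English description precedes it below -/
import Mathlib

section
/- Let P ⊂ ℝ^d be a finite point set. Let C* ⊂ ℝ^d with |C*| = k minimize the k-means cost ∑_{x ∈ P} min_{c ∈ C} ‖x - c‖² over all k-element subsets C of ℝ^d, and let Ĉ ⊆ P with |Ĉ| = k minimize this cost over all k-element subsets of P. Then the cost of Ĉ is at most 2 times the cost of C*. -/
/-- The k-means cost of a nonempty center set `C` for point set `P`. -/
noncomputable def kMeansCost {d : ℕ} (P C : Finset (EuclideanSpace ℝ (Fin d)))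
    (hC : C.Nonempty) : ℝ :=
  ∑ x ∈ P, C.inf' hC (fun c => ‖x - c‖ ^ 2)

/-!
Fix an optimal center set and group the points by their nearest center. Within a group `S`
with centroid `m`, the Huygens–Steiner identity
`∑ x ∈ S, ‖x - y‖ ^ 2 = ∑ x ∈ S, ‖x - m‖ ^ 2 + #S * ‖y - m‖ ^ 2`
shows that moving the center of `S` to the point `p ∈ S` closest to `m` costs at most
`∑ x ∈ S, ‖x - m‖ ^ 2` extra, which is no more than the cost of `S` around any center. The
representatives form a subset of the data with at most `k` points; padding it with further
data points to exactly `k` points only lowers the cost.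
-/

open Finset

section InnerProductSpace

variable {E : Type*} [SeminormedAddCommGroup E] [InnerProductSpace ℝ E]

theorem sum_norm_sub_sq_eq_of_card_smul_eq_sum (S : Finset E) {m : E}
    (hm : (#S : ℝ) • m = ∑ x ∈ S, x) (y : E) :
    ∑ x ∈ S, ‖x - y‖ ^ 2 = ∑ x ∈ S, ‖x - m‖ ^ 2 + #S * ‖y - m‖ ^ 2 := by
  have hcentered : ∑ x ∈ S, (x - m) = 0 := by
    rw [sum_sub_distrib, sum_const, ← Nat.cast_smul_eq_nsmul ℝ, hm, sub_self]
  have hcross : ∑ x ∈ S, inner ℝ (x - m) (m - y) = 0 := by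
    rw [← sum_inner, hcentered, inner_zero_left]
  calc ∑ x ∈ S, ‖x - y‖ ^ 2
      = ∑ x ∈ S, (‖x - m‖ ^ 2 + 2 * inner ℝ (x - m) (m - y) + ‖m - y‖ ^ 2) := by
        refine sum_congr rfl fun x _ => ?_
        rw [← norm_add_sq_real, sub_add_sub_cancel]
    _ = ∑ x ∈ S, ‖x - m‖ ^ 2 + #S * ‖y - m‖ ^ 2 := by
        rw [sum_add_distrib, sum_add_distrib, ← mul_sum, hcross, sum_const, nsmul_eq_mul,
          norm_sub_rev, mul_zero, add_zero]

theorem exists_mem_sum_norm_sub_sq_le_two_mul {S : Finset E} (hS : S.Nonempty) (c : E) :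
    ∃ p ∈ S, ∑ x ∈ S, ‖x - p‖ ^ 2 ≤ 2 * ∑ x ∈ S, ‖x - c‖ ^ 2 := by
  set m : E := (#S : ℝ)⁻¹ • ∑ x ∈ S, x
  have hm : (#S : ℝ) • m = ∑ x ∈ S, x :=
    smul_inv_smul₀ (Nat.cast_ne_zero.2 hS.card_pos.ne') _
  obtain ⟨p, hpS, hp⟩ := S.exists_min_image (‖· - m‖ ^ 2) hS
  refine ⟨p, hpS, ?_⟩
  have hclosest : #S * ‖p - m‖ ^ 2 ≤ ∑ x ∈ S, ‖x - m‖ ^ 2 := by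
    simpa using card_nsmul_le_sum S _ _ hp
  have hspread : 0 ≤ #S * ‖c - m‖ ^ 2 := by positivity
  rw [sum_norm_sub_sq_eq_of_card_smul_eq_sum S hm p, sum_norm_sub_sq_eq_of_card_smul_eq_sum S hm c]
  linarith

theorem exists_sum_norm_sub_sq_comp_le_two_mul (P : Finset E) (a : E → E) :
    ∃ p : E → E, (∀ x ∈ P, p (a x) ∈ P) ∧
      ∑ x ∈ P, ‖x - p (a x)‖ ^ 2 ≤ 2 * ∑ x ∈ P, ‖x - a x‖ ^ 2 := by
  classical
  have hfiber : ∀ c, ∃ q, ((P.filter (a · = c)).Nonempty → q ∈ P.filter (a · = c)) ∧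
      ∑ x ∈ P with a x = c, ‖x - q‖ ^ 2 ≤ 2 * ∑ x ∈ P with a x = c, ‖x - c‖ ^ 2 := by
    intro c
    rcases (P.filter (a · = c)).eq_empty_or_nonempty with hempty | hne
    · exact ⟨c, by simp [hempty]⟩
    · obtain ⟨q, hq, hbound⟩ := exists_mem_sum_norm_sub_sq_le_two_mul hne c
      exact ⟨q, fun _ => hq, hbound⟩
  choose p hpP hp using hfiber
  refine ⟨p, fun x hx => (mem_filter.1 (hpP _ ⟨x, mem_filter.2 ⟨hx, rfl⟩⟩)).1, ?_⟩
  have hmaps : ∀ x ∈ P, a x ∈ P.image a := fun x hx => mem_image_of_mem a hx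
  rw [← sum_fiberwise_of_maps_to hmaps, ← sum_fiberwise_of_maps_to hmaps, mul_sum]
  refine sum_le_sum fun c _ => ?_
  calc ∑ x ∈ P with a x = c, ‖x - p (a x)‖ ^ 2 = ∑ x ∈ P with a x = c, ‖x - p c‖ ^ 2 :=
        sum_congr rfl fun x hx => by rw [(mem_filter.1 hx).2]
    _ ≤ 2 * ∑ x ∈ P with a x = c, ‖x - c‖ ^ 2 := hp c
    _ = 2 * ∑ x ∈ P with a x = c, ‖x - a x‖ ^ 2 := by
        congr 1
        exact sum_congr rfl fun x hx => by rw [(mem_filter.1 hx).2]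

end InnerProductSpace

section KMeans

variable {d : ℕ} (P : Finset (EuclideanSpace ℝ (Fin d)))

theorem kMeansCost_le_sum_norm_sub_sq {C : Finset (EuclideanSpace ℝ (Fin d))}
    (hC : C.Nonempty) {f : EuclideanSpace ℝ (Fin d) → EuclideanSpace ℝ (Fin d)}
    (hf : ∀ x ∈ P, f x ∈ C) :
    kMeansCost P C hC ≤ ∑ x ∈ P, ‖x - f x‖ ^ 2 :=
  sum_le_sum fun x hx => inf'_le _ (hf x hx)

theorem kMeansCost_anti {C C' : Finset (EuclideanSpace ℝ (Fin d))}
    (hC : C.Nonempty) (hC' : C'.Nonempty) (h : C ⊆ C') :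
    kMeansCost P C' hC' ≤ kMeansCost P C hC :=
  sum_le_sum fun _ _ => inf'_mono _ h hC

theorem exists_kMeansCost_eq_sum_norm_sub_sq (C : Finset (EuclideanSpace ℝ (Fin d)))
    (hC : C.Nonempty) :
    ∃ a : EuclideanSpace ℝ (Fin d) → EuclideanSpace ℝ (Fin d), (∀ x, a x ∈ C) ∧
      kMeansCost P C hC = ∑ x ∈ P, ‖x - a x‖ ^ 2 := by
  choose a haC ha using fun x => C.exists_mem_eq_inf' hC (fun c => ‖x - c‖ ^ 2)
  exact ⟨a, haC, sum_congr rfl fun x _ => ha x⟩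

theorem exists_subset_card_le_kMeansCost_le_two_mul (hP : P.Nonempty)
    (C : Finset (EuclideanSpace ℝ (Fin d))) (hC : C.Nonempty) :
    ∃ Q ⊆ P, ∃ hQ : Q.Nonempty, #Q ≤ #C ∧ kMeansCost P Q hQ ≤ 2 * kMeansCost P C hC := by
  classical
  obtain ⟨a, haC, hcost⟩ := exists_kMeansCost_eq_sum_norm_sub_sq P C hC
  obtain ⟨p, hpP, hp⟩ := exists_sum_norm_sub_sq_comp_le_two_mul P a
  refine ⟨(P.image a).image p, ?_, (hP.image a).image p, ?_, ?_⟩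
  · rw [image_image]
    exact image_subset_iff.2 hpP
  · exact card_image_le.trans (card_le_card (image_subset_iff.2 fun x _ => haC x))
  · rw [hcost]
    exact (kMeansCost_le_sum_norm_sub_sq P _
      fun x hx => mem_image_of_mem p (mem_image_of_mem a hx)).trans hp

end KMeans

theorem discrete_centers_factor_two_general (d k : ℕ)
    (P : Finset (EuclideanSpace ℝ (Fin d))) (hkP : k ≤ P.card)
    (Cstar Chat : Finset (EuclideanSpace ℝ (Fin d)))
    (hCstarCard : Cstar.card = k)
    (hCstarNe : Cstar.Nonempty) (hChatNe : Chat.Nonempty)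
    (hChatOpt : ∀ (C : Finset (EuclideanSpace ℝ (Fin d))) (hC : C.Nonempty),
      C ⊆ P → C.card = k → kMeansCost P Chat hChatNe ≤ kMeansCost P C hC) :
    kMeansCost P Chat hChatNe ≤ 2 * kMeansCost P Cstar hCstarNe := by
  have hP : P.Nonempty := card_pos.1 (hCstarNe.card_pos.trans_le (hCstarCard ▸ hkP))
  obtain ⟨Q, hQP, hQ, hQcard, hQcost⟩ :=
    exists_subset_card_le_kMeansCost_le_two_mul P hP Cstar hCstarNe
  obtain ⟨C, hQC, hCP, hCcard⟩ := exists_subsuperset_card_eq hQP (hCstarCard ▸ hQcard) hkP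
  have hC : C.Nonempty := hQ.mono hQC
  calc kMeansCost P Chat hChatNe ≤ kMeansCost P C hC := hChatOpt C hC hCP hCcard
    _ ≤ kMeansCost P Q hQ := kMeansCost_anti P hQ hC hQC
    _ ≤ 2 * kMeansCost P Cstar hCstarNe := hQcost

theorem discrete_centers_factor_two (d k : ℕ) (hk : 0 < k)
    (P : Finset (EuclideanSpace ℝ (Fin d))) (hkP : k ≤ P.card)
    (Cstar Chat : Finset (EuclideanSpace ℝ (Fin d)))
    (hCstarCard : Cstar.card = k) (hChatCard : Chat.card = k) (hChatSub : Chat ⊆ P)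
    (hCstarNe : Cstar.Nonempty) (hChatNe : Chat.Nonempty)
    (hCstarOpt : ∀ (C : Finset (EuclideanSpace ℝ (Fin d))) (hC : C.Nonempty),
      C.card = k → kMeansCost P Cstar hCstarNe ≤ kMeansCost P C hC)
    (hChatOpt : ∀ (C : Finset (EuclideanSpace ℝ (Fin d))) (hC : C.Nonempty),
      C ⊆ P → C.card = k → kMeansCost P Chat hChatNe ≤ kMeansCost P C hC) :
    kMeansCost P Chat hChatNe ≤ 2 * kMeansCost P Cstar hCstarNe :=
  discrete_centers_factor_two_general d k P hkP Cstar Chat hCstarCard hCstarNe hChatNe hChatOpt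
end

section
/- Let F be a finite nonempty multiset of points in ℝ^d with centroid μ, and let c : ℝ^d → ℝ^d assign to each point p a center c(p). Define N as the set of points p ∈ F such that at least ⌊|F|/2⌋ other points q of F satisfy ‖p − μ‖² ≤ ‖q − μ‖², and let p̄ ∈ N minimize ‖p − c(p)‖² over N. Then |F| · ‖μ − p̄‖² ≤ 2 ∑_{p ∈ F} ‖μ − p‖² and |F| · ‖p̄ − c(p̄)‖² ≤ 2 ∑_{p ∈ F} ‖p − c(p)‖². -/
/-!
Both bounds come from one averaging step: if `x` is no larger under a nonnegative `g` than every
point of a subset `t ⊆ s` holding at least half of `s`, then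
`|s| g(x) ≤ 2 |t| g(x) ≤ 2 ∑_s g`.
For the first bound `t` is the set of points at least as far from `μ` as `p̄`, which is large by
the definition of `N`; for the second `t = N`, which holds at least half of `F` because the
points outside `N` are fewer than `⌊|F|/2⌋ + 1` (the closest of them to `μ` would otherwise
have enough points beyond it to lie in `N`).
-/

open Finset

section RepresentativeSelection

variable {α β : Type*} [DecidableEq α] [LinearOrder β]

def lowerHalf (s : Finset α) (f : α → β) : Finset α :=
  s.filter (fun p => #s / 2 ≤ #(s.filter (fun q => q ≠ p ∧ f p ≤ f q)))

lemma lowerHalf_subset (s : Finset α) (f : α → β) : lowerHalf s f ⊆ s := filter_subset _ _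

lemma card_filter_le_of_mem_lowerHalf {s : Finset α} {f : α → β} {p : α}
    (hp : p ∈ lowerHalf s f) : #s ≤ 2 * #(s.filter (fun q => f p ≤ f q)) := by
  obtain ⟨hps, hhalf⟩ := mem_filter.1 hp
  have hself : p ∈ s.filter (fun q => f p ≤ f q) := mem_filter.2 ⟨hps, le_rfl⟩
  have herase :
      s.filter (fun q => q ≠ p ∧ f p ≤ f q) = (s.filter (fun q => f p ≤ f q)).erase p := by
    ext q; simp [and_left_comm]
  rw [herase, card_erase_of_mem hself] at hhalf
  have := card_pos.2 ⟨p, hself⟩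
  omega

lemma card_le_two_mul_card_lowerHalf (s : Finset α) (f : α → β) :
    #s ≤ 2 * #(lowerHalf s f) := by
  set M := s \ lowerHalf s f
  have hsplit : #M + #(lowerHalf s f) = #s := card_sdiff_add_card_eq_card (lowerHalf_subset s f)
  rcases M.eq_empty_or_nonempty with hM | hM
  · rw [hM, card_empty] at hsplit; omega
  obtain ⟨p₀, hp₀, hmin⟩ := M.exists_min_image f hM
  have hsub : M.erase p₀ ⊆ s.filter (fun q => q ≠ p₀ ∧ f p₀ ≤ f q) := fun q hq => by
    obtain ⟨hne, hqM⟩ := mem_erase.1 hq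
    exact mem_filter.2 ⟨(mem_sdiff.1 hqM).1, hne, hmin q hqM⟩
  have hfew : #(s.filter (fun q => q ≠ p₀ ∧ f p₀ ≤ f q)) < #s / 2 := by
    obtain ⟨hp₀s, hp₀N⟩ := mem_sdiff.1 hp₀
    exact not_le.1 fun h => hp₀N (mem_filter.2 ⟨hp₀s, h⟩)
  have := card_le_card hsub
  rw [card_erase_of_mem hp₀] at this
  omega

end RepresentativeSelection

lemma card_mul_le_two_mul_sum {ι R : Type*} [CommSemiring R] [PartialOrder R] [IsOrderedRing R]
    {s t : Finset ι} {g : ι → R} {x : ι} (hts : t ⊆ s) (hcard : #s ≤ 2 * #t)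
    (hle : ∀ q ∈ t, g x ≤ g q) (hx : x ∈ s) (hg : ∀ q ∈ s, 0 ≤ g q) :
    (#s : R) * g x ≤ 2 * ∑ q ∈ s, g q :=
  calc (#s : R) * g x
      ≤ (2 * #t : ℕ) * g x := mul_le_mul_of_nonneg_right (Nat.mono_cast hcard) (hg x hx)
    _ = 2 * (#t • g x) := by push_cast; rw [nsmul_eq_mul]; ring
    _ ≤ 2 * ∑ q ∈ t, g q :=
      mul_le_mul_of_nonneg_left (card_nsmul_le_sum t g (g x) hle) zero_le_two
    _ ≤ 2 * ∑ q ∈ s, g q :=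
      mul_le_mul_of_nonneg_left (sum_le_sum_of_subset_of_nonneg hts fun q hq _ => hg q hq)
        zero_le_two

theorem kmeans_representative_bounds_general (d : ℕ) (F : Finset (EuclideanSpace ℝ (Fin d)))
    (c : EuclideanSpace ℝ (Fin d) → EuclideanSpace ℝ (Fin d))
    (μ : EuclideanSpace ℝ (Fin d))
    (N : Finset (EuclideanSpace ℝ (Fin d)))
    (hN : N = F.filter (fun p =>
      F.card / 2 ≤ (F.filter (fun q => q ≠ p ∧ ‖p - μ‖ ^ 2 ≤ ‖q - μ‖ ^ 2)).card))
    (pbar : EuclideanSpace ℝ (Fin d)) (hpbar : pbar ∈ N)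
    (hmin : ∀ p ∈ N, ‖pbar - c pbar‖ ^ 2 ≤ ‖p - c p‖ ^ 2) :
    (F.card : ℝ) * ‖μ - pbar‖ ^ 2 ≤ 2 * ∑ p ∈ F, ‖μ - p‖ ^ 2 ∧
    (F.card : ℝ) * ‖pbar - c pbar‖ ^ 2 ≤ 2 * ∑ p ∈ F, ‖p - c p‖ ^ 2 := by
  change N = lowerHalf F (fun p => ‖p - μ‖ ^ 2) at hN
  subst hN
  have hpbarF : pbar ∈ F := lowerHalf_subset _ _ hpbar
  simp_rw [norm_sub_rev μ]
  constructor
  · exact card_mul_le_two_mul_sum (g := fun p => ‖p - μ‖ ^ 2) (filter_subset _ F)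
      (card_filter_le_of_mem_lowerHalf hpbar)
      (fun q hq => (mem_filter.1 hq).2) hpbarF (fun _ _ => by positivity)
  · exact card_mul_le_two_mul_sum (g := fun p => ‖p - c p‖ ^ 2) (lowerHalf_subset _ _)
      (card_le_two_mul_card_lowerHalf F _)
      hmin hpbarF (fun _ _ => by positivity)

/-- Representative-selection bounds in the k-means fairlet analysis. -/
theorem kmeans_representative_bounds (d : ℕ) (F : Finset (EuclideanSpace ℝ (Fin d)))
    (hF : F.Nonempty) (c : EuclideanSpace ℝ (Fin d) → EuclideanSpace ℝ (Fin d))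
    (μ : EuclideanSpace ℝ (Fin d)) (hμ : μ = (F.card : ℝ)⁻¹ • ∑ p ∈ F, p)
    (N : Finset (EuclideanSpace ℝ (Fin d)))
    (hN : N = F.filter (fun p =>
      F.card / 2 ≤ (F.filter (fun q => q ≠ p ∧ ‖p - μ‖ ^ 2 ≤ ‖q - μ‖ ^ 2)).card))
    (pbar : EuclideanSpace ℝ (Fin d)) (hpbar : pbar ∈ N)
    (hmin : ∀ p ∈ N, ‖pbar - c pbar‖ ^ 2 ≤ ‖p - c p‖ ^ 2) :
    (F.card : ℝ) * ‖μ - pbar‖ ^ 2 ≤ 2 * ∑ p ∈ F, ‖μ - p‖ ^ 2 ∧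
    (F.card : ℝ) * ‖pbar - c pbar‖ ^ 2 ≤ 2 * ∑ p ∈ F, ‖p - c p‖ ^ 2 :=
  kmeans_representative_bounds_general d F c μ N hN pbar hpbar hmin
end

section
/- In the school-assignment reduction graph: given an Exact-Cover-by-3-Sets instance (U, F) with |U| = 3m that admits an exact cover F' ⊆ F with |F'| = m, the constructed fair assignment instance has a fair assignment of k-center cost 1 in which every cluster has red:blue ratio exactly 1:3. Concretely: assign to the center at each A ∈ F the red vertex A itself and its 3 auxiliary blue vertices; additionally, for each A ∈ F', assign the 3 blue element-vertices of A and one distinct red vertex from T (where |T| = m) to the center at A. Every vertex is assigned to a center at graph distance ≤ 1, each center at A ∈ F' serves 2 red and 6 blue vertices, and each center at A ∉ F' serves 1 red and 3 blue vertices. -/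
open Finset

/-- Vertices of the reduction graph: set-vertices (red), element-vertices (blue),
auxiliary vertices (blue, three per set), and T-vertices (red, indexed by naturals). -/
abbrev Vtx (α : Type*) := Finset α ⊕ (α ⊕ ((Finset α × Fin 3) ⊕ ℕ))

/-- `adjC Fam m A v`: vertex `v` is adjacent to the center vertex at set `A`. -/
def adjC {α : Type*} (Fam : Finset (Finset α)) (m : ℕ) (A : Finset α) :
    Vtx α → Prop
  | Sum.inl _ => False
  | Sum.inr (Sum.inl e) => A ∈ Fam ∧ e ∈ A
  | Sum.inr (Sum.inr (Sum.inl (B, _))) => A ∈ Fam ∧ B = A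
  | Sum.inr (Sum.inr (Sum.inr t)) => A ∈ Fam ∧ t < m

/-- The vertex set of the reduction graph. -/
def vertexFinset {α : Type*} [DecidableEq α] (U : Finset α)
    (Fam : Finset (Finset α)) (m : ℕ) : Finset (Vtx α) :=
  Fam.image Sum.inl ∪ U.image (fun e => Sum.inr (Sum.inl e)) ∪
    (Fam ×ˢ (Finset.univ : Finset (Fin 3))).image
      (fun p => Sum.inr (Sum.inr (Sum.inl p))) ∪
    (Finset.range m).image (fun t => Sum.inr (Sum.inr (Sum.inr t)))

/-- Set-vertices and T-vertices are red; element- and auxiliary vertices are blue. -/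
def isRed {α : Type*} : Vtx α → Bool
  | Sum.inl _ => true
  | Sum.inr (Sum.inr (Sum.inr _)) => true
  | _ => false

/-! Every set-vertex keeps itself and its three auxiliary vertices, which is already a 1:3
cluster. The exact cover sends each element-vertex to the unique chosen set containing it, and a
bijection from `T = range m` onto the `m` chosen sets gives each chosen set one more red vertex,
so a chosen set's cluster becomes 2:6. The cluster sizes are computed by splitting the vertex set
into its four kinds. -/

def coverAssignment {α : Type*} (cover : α → Finset α) (slot : ℕ → Finset α) :
    Vtx α → Finset α
  | Sum.inl B => B
  | Sum.inr (Sum.inl e) => cover e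
  | Sum.inr (Sum.inr (Sum.inl (B, _))) => B
  | Sum.inr (Sum.inr (Sum.inr t)) => slot t

theorem card_filter_eq_of_bijOn {ι β : Type*} [DecidableEq β] {f : ι → β} {s : Finset ι}
    {t : Finset β} (hf : Set.BijOn f s t) (b : β) :
    #{x ∈ s | f x = b} = if b ∈ t then 1 else 0 := by
  split_ifs with hb
  · obtain ⟨a, ha, rfl⟩ := hf.surjOn hb
    refine card_eq_one.2 ⟨a, eq_singleton_iff_unique_mem.2 ⟨mem_filter.2 ⟨ha, rfl⟩, ?_⟩⟩
    intro x hx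
    exact hf.injOn (mem_filter.1 hx).1 ha (mem_filter.1 hx).2
  · exact card_eq_zero.2 <| filter_eq_empty_iff.2 fun x hx hfx => hb (hfx ▸ hf.mapsTo hx)

theorem exists_bijOn_range {β : Type*} [Nonempty β] {t : Finset β} {m : ℕ} (ht : #t = m) :
    ∃ f : ℕ → β, Set.BijOn f (range m) t :=
  (range m).finite_toSet.exists_bijOn_of_encard_eq <| by
    simp only [Set.encard_coe_eq_coe_finsetCard, card_range, ht]

section Cover

variable {α : Type*} [DecidableEq α] {U : Finset α} {F' : Finset (Finset α)}
  {cover : α → Finset α} {A : Finset α}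

theorem filter_cover_eq_self (hcover : ∀ e ∈ U, ∃! A, A ∈ F' ∧ e ∈ A)
    (hc : ∀ e ∈ U, cover e ∈ F' ∧ e ∈ cover e) (hA : A ∈ F') (hAU : A ⊆ U) :
    {e ∈ U | cover e = A} = A := by
  ext e
  simp only [mem_filter]
  constructor
  · rintro ⟨he, rfl⟩
    exact (hc e he).2
  · intro heA
    exact ⟨hAU heA, (hcover e (hAU heA)).unique (hc e (hAU heA)) ⟨hA, heA⟩⟩

theorem filter_cover_eq_empty (hc : ∀ e ∈ U, cover e ∈ F' ∧ e ∈ cover e) (hA : A ∉ F') :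
    {e ∈ U | cover e = A} = ∅ :=
  filter_eq_empty_iff.2 fun e he hcA => hA (hcA ▸ (hc e he).1)

end Cover

section Counting

variable {α : Type*} [DecidableEq α] {U : Finset α} {Fam : Finset (Finset α)} {m : ℕ}

theorem card_filter_vertexFinset (P : Vtx α → Prop) [DecidablePred P] :
    #{v ∈ vertexFinset U Fam m | P v} =
      #{B ∈ Fam | P (Sum.inl B)} + #{e ∈ U | P (Sum.inr (Sum.inl e))} +
        #{p ∈ Fam ×ˢ (univ : Finset (Fin 3)) | P (Sum.inr (Sum.inr (Sum.inl p)))} +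
          #{t ∈ range m | P (Sum.inr (Sum.inr (Sum.inr t)))} := by
  rw [vertexFinset, filter_union, filter_union, filter_union, filter_image, filter_image,
    filter_image, filter_image, card_union_of_disjoint, card_union_of_disjoint,
    card_union_of_disjoint]
  · rw [card_image_of_injective _ Sum.inl_injective,
      card_image_of_injective _ (fun _ _ h => by simpa using h),
      card_image_of_injective _ (fun _ _ h => by simpa using h),
      card_image_of_injective _ (fun _ _ h => by simpa using h)]
  all_goals simp [disjoint_left]

variable {cover : α → Finset α} {slot : ℕ → Finset α} {A : Finset α}

theorem card_red_fiber_coverAssignment (hA : A ∈ Fam) :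
    #{v ∈ vertexFinset U Fam m | coverAssignment cover slot v = A ∧ isRed v} =
      1 + #{t ∈ range m | slot t = A} := by
  rw [card_filter_vertexFinset]
  simp [coverAssignment, isRed, filter_eq', hA]

theorem card_blue_fiber_coverAssignment (hA : A ∈ Fam) :
    #{v ∈ vertexFinset U Fam m | coverAssignment cover slot v = A ∧ ¬isRed v} =
      #{e ∈ U | cover e = A} + 3 := by
  rw [card_filter_vertexFinset]
  simp [coverAssignment, isRed, filter_product_left (· = A), filter_eq', hA]

theorem coverAssignment_mem_and_adjC (hc : ∀ e ∈ U, cover e ∈ Fam ∧ e ∈ cover e)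
    (hslot : ∀ t < m, slot t ∈ Fam) :
    ∀ v ∈ vertexFinset U Fam m, coverAssignment cover slot v ∈ Fam ∧
      (v = Sum.inl (coverAssignment cover slot v) ∨
        adjC Fam m (coverAssignment cover slot v) v) := by
  rintro (B | e | ⟨B, i⟩ | t) hv
  · have hB : B ∈ Fam := by simpa [vertexFinset] using hv
    exact ⟨hB, Or.inl rfl⟩
  · have he : e ∈ U := by simpa [vertexFinset] using hv
    exact ⟨(hc e he).1, Or.inr (hc e he)⟩
  · have hB : B ∈ Fam := by simpa [vertexFinset] using hv
    exact ⟨hB, Or.inr ⟨hB, rfl⟩⟩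
  · have ht : t < m := by simpa [vertexFinset] using hv
    exact ⟨hslot t ht, Or.inr ⟨hslot t ht, ht⟩⟩

end Counting

theorem exact_cover_gives_fair_assignment_general {α : Type*} [DecidableEq α]
    (U : Finset α) (Fam : Finset (Finset α)) (m : ℕ)
    (h3 : ∀ A ∈ Fam, A.card = 3 ∧ A ⊆ U)
    (F' : Finset (Finset α)) (hF' : F' ⊆ Fam) (hF'card : F'.card = m)
    (hcover : ∀ e ∈ U, ∃! A, A ∈ F' ∧ e ∈ A) :
    ∃ φ : Vtx α → Finset α,
      (∀ v ∈ vertexFinset U Fam m,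
        φ v ∈ Fam ∧ (v = Sum.inl (φ v) ∨ adjC Fam m (φ v) v)) ∧
      (∀ A ∈ F',
        ((vertexFinset U Fam m).filter (fun v => φ v = A ∧ isRed v)).card = 2 ∧
        ((vertexFinset U Fam m).filter (fun v => φ v = A ∧ ¬ isRed v)).card = 6) ∧
      (∀ A ∈ Fam, A ∉ F' →
        ((vertexFinset U Fam m).filter (fun v => φ v = A ∧ isRed v)).card = 1 ∧
        ((vertexFinset U Fam m).filter (fun v => φ v = A ∧ ¬ isRed v)).card = 3) := by
  choose! cover hc using fun e he => (hcover e he).exists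
  obtain ⟨slot, hslot⟩ := exists_bijOn_range hF'card
  refine ⟨coverAssignment cover slot, ?_, fun A hA => ?_, fun A hAFam hA => ?_⟩
  · exact coverAssignment_mem_and_adjC (fun e he => ⟨hF' (hc e he).1, (hc e he).2⟩)
      (fun t ht => hF' (hslot.mapsTo (mem_range.2 ht)))
  · obtain ⟨hAcard, hAU⟩ := h3 A (hF' hA)
    rw [card_red_fiber_coverAssignment (hF' hA), card_blue_fiber_coverAssignment (hF' hA),
      card_filter_eq_of_bijOn hslot, if_pos hA, filter_cover_eq_self hcover hc hA hAU, hAcard]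
    exact ⟨rfl, rfl⟩
  · rw [card_red_fiber_coverAssignment hAFam, card_blue_fiber_coverAssignment hAFam,
      card_filter_eq_of_bijOn hslot, if_neg hA, filter_cover_eq_empty hc hA]
    exact ⟨rfl, rfl⟩

theorem exact_cover_gives_fair_assignment {α : Type*} [DecidableEq α]
    (U : Finset α) (Fam : Finset (Finset α)) (m : ℕ)
    (hU : U.card = 3 * m)
    (h3 : ∀ A ∈ Fam, A.card = 3 ∧ A ⊆ U)
    (F' : Finset (Finset α)) (hF' : F' ⊆ Fam) (hF'card : F'.card = m)
    (hcover : ∀ e ∈ U, ∃! A, A ∈ F' ∧ e ∈ A) :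
    ∃ φ : Vtx α → Finset α,
      (∀ v ∈ vertexFinset U Fam m,
        φ v ∈ Fam ∧ (v = Sum.inl (φ v) ∨ adjC Fam m (φ v) v)) ∧
      (∀ A ∈ F',
        ((vertexFinset U Fam m).filter (fun v => φ v = A ∧ isRed v)).card = 2 ∧
        ((vertexFinset U Fam m).filter (fun v => φ v = A ∧ ¬ isRed v)).card = 6) ∧
      (∀ A ∈ Fam, A ∉ F' →
        ((vertexFinset U Fam m).filter (fun v => φ v = A ∧ isRed v)).card = 1 ∧
        ((vertexFinset U Fam m).filter (fun v => φ v = A ∧ ¬ isRed v)).card = 3) :=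
  exact_cover_gives_fair_assignment_general U Fam m h3 F' hF' hF'card hcover
end

section
/- Conversely, in the same reduction graph, if there is an assignment of all vertices to the opened centers (one at each A ∈ F) such that every vertex is assigned at distance < 3 and every cluster has red:blue ratio 1:3, then the sets A ∈ F whose clusters contain two red vertices form an exact cover of U. -/
open Finset

/-- `within2 Fam m A v`: vertex `v` is at graph distance at most 2 (i.e. `< 3`)
from the center vertex at set `A`. Since all edges of the reduction graph are
incident to set-vertices, a path of length 2 ending at `Sum.inl A` must start at
a set-vertex `Sum.inl B` sharing a neighbor with `Sum.inl A`. -/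
def within2 {α : Type*} (Fam : Finset (Finset α)) (m : ℕ) (A : Finset α)
    (v : Vtx α) : Prop :=
  v = Sum.inl A ∨ adjC Fam m A v ∨
    ∃ (B : Finset α) (w : Vtx α), v = Sum.inl B ∧ adjC Fam m B w ∧ adjC Fam m A w

/- Each center owns three blue vertices that no other center can take: the auxiliary vertices of
its set. So if it collects `k ≤ 3` element-vertices of its set, its blue count `k + 3` is a
multiple of `3`, forcing `k = 0` (one red vertex) or `k = 3` (two red vertices). The center that
receives an element `e` therefore collects its whole set and has two red vertices, and any center
with two red vertices whose set contains `e` has collected `e`, so it is that same center. -/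

section FairAssignment

variable {α : Type*}

@[simp]
lemma within2_elt_iff {Fam : Finset (Finset α)} {m : ℕ} {A : Finset α} {e : α} :
    within2 Fam m A (Sum.inr (Sum.inl e)) ↔ A ∈ Fam ∧ e ∈ A := by
  simp [within2, adjC]

@[simp]
lemma within2_aux_iff {Fam : Finset (Finset α)} {m : ℕ} {A B : Finset α} {i : Fin 3} :
    within2 Fam m A (Sum.inr (Sum.inr (Sum.inl (B, i)))) ↔ A ∈ Fam ∧ B = A := by
  simp [within2, adjC]

variable [DecidableEq α] {U : Finset α} {Fam : Finset (Finset α)} {m : ℕ}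

@[simp]
lemma elt_mem_vertexFinset {e : α} :
    (Sum.inr (Sum.inl e) : Vtx α) ∈ vertexFinset U Fam m ↔ e ∈ U := by
  simp [vertexFinset]

@[simp]
lemma aux_mem_vertexFinset {B : Finset α} {i : Fin 3} :
    (Sum.inr (Sum.inr (Sum.inl (B, i))) : Vtx α) ∈ vertexFinset U Fam m ↔ B ∈ Fam := by
  simp [vertexFinset]

def collectedElements (φ : Vtx α → Finset α) (A : Finset α) : Finset α :=
  A.filter fun x => φ (Sum.inr (Sum.inl x)) = A

variable {φ : Vtx α → Finset α} {A : Finset α}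

lemma blue_cluster_eq (hwithin : ∀ v ∈ vertexFinset U Fam m, within2 Fam m (φ v) v)
    (hA : A ∈ Fam) (hAU : A ⊆ U) :
    (vertexFinset U Fam m).filter (fun v => φ v = A ∧ ¬ isRed v) =
      (collectedElements φ A).image (fun x => Sum.inr (Sum.inl x)) ∪
        (univ : Finset (Fin 3)).image (fun i => Sum.inr (Sum.inr (Sum.inl (A, i)))) := by
  ext v
  rcases v with B | e | ⟨B, i⟩ | t
  · simp [isRed]
  · simp only [isRed, Bool.not_eq_true, mem_filter, elt_mem_vertexFinset, and_true,
      collectedElements, mem_union, mem_image, Sum.inr.injEq, Sum.inl.injEq, exists_eq_right,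
      mem_univ, reduceCtorEq, and_false, exists_const, or_false, and_congr_left_iff]
    rintro rfl
    exact ⟨fun he => (within2_elt_iff.1 (hwithin _ (elt_mem_vertexFinset.2 he))).2,
      fun he => hAU he⟩
  · simp only [isRed, Bool.not_eq_true, mem_filter, aux_mem_vertexFinset, and_true, mem_union,
      mem_image, Sum.inr.injEq, reduceCtorEq, and_false, exists_false, mem_univ, Sum.inl.injEq,
      Prod.mk.injEq, true_and, exists_eq_right, false_or]
    have hφ : B ∈ Fam → φ (Sum.inr (Sum.inr (Sum.inl (B, i)))) = B := fun hB =>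
      (within2_aux_iff.1 (hwithin _ (aux_mem_vertexFinset.2 hB))).2.symm
    constructor
    · rintro ⟨hB, rfl⟩
      exact hφ hB
    · rintro rfl
      exact ⟨hA, hφ hA⟩
  · simp [isRed]

lemma card_blue_cluster (hwithin : ∀ v ∈ vertexFinset U Fam m, within2 Fam m (φ v) v)
    (hA : A ∈ Fam) (hAU : A ⊆ U) :
    ((vertexFinset U Fam m).filter (fun v => φ v = A ∧ ¬ isRed v)).card =
      (collectedElements φ A).card + 3 := by
  rw [blue_cluster_eq hwithin hA hAU, card_union_of_disjoint,
    card_image_of_injective _ (fun _ _ h => by simpa using h),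
    card_image_of_injective _ (fun _ _ h => by simpa using h), card_univ, Fintype.card_fin]
  simp [disjoint_left]

lemma card_red_cluster_eq_two_iff
    (hwithin : ∀ v ∈ vertexFinset U Fam m, within2 Fam m (φ v) v)
    (hA : A ∈ Fam) (hA3 : A.card = 3) (hAU : A ⊆ U)
    (hratio : ((vertexFinset U Fam m).filter (fun v => φ v = A ∧ ¬ isRed v)).card =
      3 * ((vertexFinset U Fam m).filter (fun v => φ v = A ∧ isRed v)).card) :
    ((vertexFinset U Fam m).filter (fun v => φ v = A ∧ isRed v)).card = 2 ↔
      ∀ x ∈ A, φ (Sum.inr (Sum.inl x)) = A := by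
  rw [← card_filter_eq_iff, hA3]
  rw [card_blue_cluster hwithin hA hAU] at hratio
  unfold collectedElements at hratio
  omega

lemma forall_mem_assigned_of_assigned
    (hwithin : ∀ v ∈ vertexFinset U Fam m, within2 Fam m (φ v) v)
    (hA : A ∈ Fam) (hA3 : A.card = 3) (hAU : A ⊆ U)
    (hratio : ((vertexFinset U Fam m).filter (fun v => φ v = A ∧ ¬ isRed v)).card =
      3 * ((vertexFinset U Fam m).filter (fun v => φ v = A ∧ isRed v)).card)
    {x : α} (hx : x ∈ A) (hφx : φ (Sum.inr (Sum.inl x)) = A) :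
    ∀ y ∈ A, φ (Sum.inr (Sum.inl y)) = A := by
  rw [← card_filter_eq_iff, hA3]
  rw [card_blue_cluster hwithin hA hAU] at hratio
  have hpos : 0 < (collectedElements φ A).card := card_pos.2 ⟨x, mem_filter.2 ⟨hx, hφx⟩⟩
  have hle : (collectedElements φ A).card ≤ 3 := hA3 ▸ card_filter_le _ _
  unfold collectedElements at hratio hpos hle
  omega

end FairAssignment

theorem fair_assignment_gives_exact_cover_general {α : Type*} [DecidableEq α]
    (U : Finset α) (Fam : Finset (Finset α)) (m : ℕ)
    (h3 : ∀ A ∈ Fam, A.card = 3 ∧ A ⊆ U)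
    (φ : Vtx α → Finset α)
    (hassign : ∀ v ∈ vertexFinset U Fam m,
      φ v ∈ Fam ∧ within2 Fam m (φ v) v)
    (hratio : ∀ A ∈ Fam,
      ((vertexFinset U Fam m).filter (fun v => φ v = A ∧ ¬ isRed v)).card =
        3 * ((vertexFinset U Fam m).filter (fun v => φ v = A ∧ isRed v)).card) :
    ∀ e ∈ U, ∃! A, (A ∈ Fam ∧
      ((vertexFinset U Fam m).filter (fun v => φ v = A ∧ isRed v)).card = 2) ∧
      e ∈ A := by
  have hwithin : ∀ v ∈ vertexFinset U Fam m, within2 Fam m (φ v) v :=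
    fun v hv => (hassign v hv).2
  have two_red_iff : ∀ B ∈ Fam,
      ((vertexFinset U Fam m).filter (fun v => φ v = B ∧ isRed v)).card = 2 ↔
        ∀ x ∈ B, φ (Sum.inr (Sum.inl x)) = B := fun B hB =>
    card_red_cluster_eq_two_iff hwithin hB (h3 B hB).1 (h3 B hB).2 (hratio B hB)
  intro e he
  obtain ⟨hAF, heA⟩ := within2_elt_iff.1 (hwithin _ (elt_mem_vertexFinset.2 he))
  refine ⟨φ (Sum.inr (Sum.inl e)), ⟨⟨hAF, (two_red_iff _ hAF).2 ?_⟩, heA⟩, ?_⟩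
  · exact forall_mem_assigned_of_assigned hwithin hAF (h3 _ hAF).1 (h3 _ hAF).2 (hratio _ hAF)
      heA rfl
  · rintro B ⟨⟨hB, hB2⟩, heB⟩
    exact ((two_red_iff B hB).1 hB2 e heB).symm

theorem fair_assignment_gives_exact_cover {α : Type*} [DecidableEq α]
    (U : Finset α) (Fam : Finset (Finset α)) (m : ℕ)
    (hU : U.card = 3 * m)
    (h3 : ∀ A ∈ Fam, A.card = 3 ∧ A ⊆ U)
    (φ : Vtx α → Finset α)
    (hassign : ∀ v ∈ vertexFinset U Fam m,
      φ v ∈ Fam ∧ within2 Fam m (φ v) v)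
    (hratio : ∀ A ∈ Fam,
      ((vertexFinset U Fam m).filter (fun v => φ v = A ∧ ¬ isRed v)).card =
        3 * ((vertexFinset U Fam m).filter (fun v => φ v = A ∧ isRed v)).card) :
    ∀ e ∈ U, ∃! A, (A ∈ Fam ∧
      ((vertexFinset U Fam m).filter (fun v => φ v = A ∧ isRed v)).card = 2) ∧
      e ∈ A :=
  fair_assignment_gives_exact_cover_general U Fam m h3 φ hassign hratio
end

section
/- Fairlet union cost bound for k-median: let P be a finite point set in a metric space, partitioned into fairlets F_i with centers c_i (i ∈ I). Let c : P → L be any assignment of points to centers (a colorblind clustering). For each i, choose p_i ∈ F_i minimizing d(c_i, p) + d(p, c(p)) over p ∈ F_i, and assign all points of F_i to c(p_i). Then the total cost satisfies ∑_{i ∈ I} ∑_{p ∈ F_i} d(p, c(p_i)) ≤ 2·∑_{i ∈ I} ∑_{p ∈ F_i} d(p, c_i) + ∑_{p ∈ P} d(p, c(p)). -/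
open Finset

theorem Finset.sum_eq_sum_sum_of_partition {α ι β : Type*} [Fintype ι] [AddCommMonoid β]
    {P : Finset α} {F : ι → Finset α}
    (hdisj : ∀ i j : ι, i ≠ j → Disjoint (F i) (F j)) (hunion : ∀ p, p ∈ P ↔ ∃ i, p ∈ F i)
    (f : α → β) :
    ∑ p ∈ P, f p = ∑ i, ∑ p ∈ F i, f p := by
  have hF : (↑(univ : Finset ι) : Set ι).PairwiseDisjoint F := fun i _ j _ hij ↦ hdisj i j hij
  have hP : P = univ.disjiUnion F hF := by
    ext p
    simp [hunion]
  rw [hP, sum_disjiUnion]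

theorem dist_le_two_mul_dist_add_of_dist_add_dist_le {M : Type*} [PseudoMetricSpace M]
    {c : M → M} {a p q : M}
    (hq : dist a q + dist q (c q) ≤ dist a p + dist p (c p)) :
    dist p (c q) ≤ 2 * dist p a + dist p (c p) :=
  calc dist p (c q) ≤ dist p a + dist a q + dist q (c q) := dist_triangle4 p a q (c q)
    _ ≤ dist p a + (dist a p + dist p (c p)) := by linarith
    _ = 2 * dist p a + dist p (c p) := by rw [dist_comm a p]; ring

theorem fairlet_union_cost_bound_general {M ι : Type*} [MetricSpace M] [Fintype ι]
    (P : Finset M) (F : ι → Finset M) (cc : ι → M) (c : M → M)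
    (hdisj : ∀ i j : ι, i ≠ j → Disjoint (F i) (F j))
    (hunion : ∀ p : M, p ∈ P ↔ ∃ i, p ∈ F i)
    (pbar : ι → M)
    (hmin : ∀ i, ∀ p ∈ F i,
      dist (cc i) (pbar i) + dist (pbar i) (c (pbar i)) ≤
        dist (cc i) p + dist p (c p)) :
    ∑ i : ι, ∑ p ∈ F i, dist p (c (pbar i)) ≤
      2 * (∑ i : ι, ∑ p ∈ F i, dist p (cc i)) + ∑ p ∈ P, dist p (c p) := by
  rw [sum_eq_sum_sum_of_partition hdisj hunion, mul_sum, ← sum_add_distrib]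
  refine sum_le_sum fun i _ ↦ ?_
  rw [mul_sum, ← sum_add_distrib]
  exact sum_le_sum fun p hp ↦ dist_le_two_mul_dist_add_of_dist_add_dist_le (hmin i p hp)

/-- Fairlet union cost bound for k-median. -/
theorem fairlet_union_cost_bound {M ι : Type*} [MetricSpace M] [Fintype ι]
    [DecidableEq M]
    (P : Finset M) (F : ι → Finset M) (cc : ι → M) (c : M → M)
    (hne : ∀ i, (F i).Nonempty)
    (hdisj : ∀ i j : ι, i ≠ j → Disjoint (F i) (F j))
    (hunion : ∀ p : M, p ∈ P ↔ ∃ i, p ∈ F i)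
    (pbar : ι → M) (hpbar : ∀ i, pbar i ∈ F i)
    (hmin : ∀ i, ∀ p ∈ F i,
      dist (cc i) (pbar i) + dist (pbar i) (c (pbar i)) ≤
        dist (cc i) p + dist p (c p)) :
    ∑ i : ι, ∑ p ∈ F i, dist p (c (pbar i)) ≤
      2 * (∑ i : ι, ∑ p ∈ F i, dist p (cc i)) + ∑ p ∈ P, dist p (c p) :=
  fairlet_union_cost_bound_general P F cc c hdisj hunion pbar hmin
end
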